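/- Let f, g : K → K be functions and λ₁, λ₂, λ₃ ∈ K be such that f(λ₁), f(λ₂), f(λ₃) are pairwise distinct. Define, for distinct k, l ∈ {1,2,3}, t_{kl} = (g(λ_l)/(f(λ_k) − f(λ_l)))·(C_{kl} + σ̂_{kl}) ∈ U(g)^{⊗3}. Then t satisfies the classical Yang–Baxter equation: YB(t)_{123} = 0. -/

import Mathlib

open scoped TensorProduct

noncomputable section

/-- `Σ i, u i ⊗ v i ⊗ 1` in `U(g)⊗U(g)⊗U(g)`: the tensor with factors in positions 1, 2. -/
def tensor12 (K : Type*) {L I : Type*} [Field K] [LieRing L] [LieAlgebra K L]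
    [Fintype I] (u v : I → L) :
    UniversalEnvelopingAlgebra K L ⊗[K]
      (UniversalEnvelopingAlgebra K L ⊗[K] UniversalEnvelopingAlgebra K L) :=
  ∑ i, UniversalEnvelopingAlgebra.ι K (u i) ⊗ₜ[K]
        (UniversalEnvelopingAlgebra.ι K (v i) ⊗ₜ[K] 1)

/-- `Σ i, u i ⊗ 1 ⊗ v i`: the tensor with factors in positions 1, 3. -/
def tensor13 (K : Type*) {L I : Type*} [Field K] [LieRing L] [LieAlgebra K L]
    [Fintype I] (u v : I → L) :
    UniversalEnvelopingAlgebra K L ⊗[K]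
      (UniversalEnvelopingAlgebra K L ⊗[K] UniversalEnvelopingAlgebra K L) :=
  ∑ i, UniversalEnvelopingAlgebra.ι K (u i) ⊗ₜ[K]
        ((1 : UniversalEnvelopingAlgebra K L) ⊗ₜ[K] UniversalEnvelopingAlgebra.ι K (v i))

/-- `Σ i, 1 ⊗ u i ⊗ v i`: the tensor with factors in positions 2, 3. -/
def tensor23 (K : Type*) {L I : Type*} [Field K] [LieRing L] [LieAlgebra K L]
    [Fintype I] (u v : I → L) :
    UniversalEnvelopingAlgebra K L ⊗[K]
      (UniversalEnvelopingAlgebra K L ⊗[K] UniversalEnvelopingAlgebra K L) :=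
  ∑ i, (1 : UniversalEnvelopingAlgebra K L) ⊗ₜ[K]
        (UniversalEnvelopingAlgebra.ι K (u i) ⊗ₜ[K] UniversalEnvelopingAlgebra.ι K (v i))

/-!
Write `P = 1 + σ` and `r = Σᵢ P eᵢ ⊗ e'ᵢ`, so that `t_{kl}` is a scalar multiple of `r_{kl}`.
Since `ad x` is skew and `σ` is orthogonal for `B`, the Casimir tensor `Σᵢ eᵢ ⊗ e'ᵢ` is
`g`-invariant and `r` is invariant under the fixed subalgebra `g^σ`, which contains every `P y`.
Moreover `σ` is `B`-self-adjoint, hence `r = Σᵢ eᵢ ⊗ P e'ᵢ` also has its second legs in `g^σ`.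
These give `[r₁₂, r₁₃ + r₂₃] = 0` and `[r₁₂ + r₁₃, r₂₃] = 0`, so the three commutators in
`YB(t)` are `X`, `-X`, `X` with `X = [r₁₂, r₁₃]`, and the coefficient of `X` is `g(λ₂) g(λ₃)`
times the partial-fraction sum
`1/((f₁-f₂)(f₁-f₃)) - 1/((f₁-f₂)(f₂-f₃)) + 1/((f₁-f₃)(f₂-f₃)) = 0`.
-/

open TensorProduct

section DualBasis

variable {K L I : Type*} [CommRing K] [AddCommGroup L] [Module K L] [Fintype I] [DecidableEq I]
  {B : LinearMap.BilinForm K L} {e : Module.Basis I K L} {e' : I → L}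

theorem sum_apply_dual_smul_basis (hdual : ∀ i j, B (e i) (e' j) = if i = j then 1 else 0)
    (y : L) : ∑ k, B y (e' k) • e k = y := by
  have hrepr : ∀ k, B y (e' k) = e.repr y k := fun k =>
    LinearMap.congr_fun (e.ext (f₁ := B.flip (e' k)) (f₂ := e.coord k) fun i => by
      simp [hdual, Finsupp.single_apply]) y
  simp_rw [hrepr]
  exact e.sum_repr y

theorem sum_basis_apply_smul_dual (hB : B.Nondegenerate)
    (hdual : ∀ i j, B (e i) (e' j) = if i = j then 1 else 0) (y : L) :
    ∑ k, B (e k) y • e' k = y := by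
  rw [← sub_eq_zero]
  refine hB.2 _ fun x => ?_
  suffices B.flip (∑ k, B (e k) y • e' k - y) = 0 from LinearMap.congr_fun this x
  refine e.ext fun i => ?_
  simp [hdual]

theorem sum_apply_tmul_dual_eq_sum_tmul_apply (hB : B.Nondegenerate)
    (hdual : ∀ i j, B (e i) (e' j) = if i = j then 1 else 0) {φ ψ : L →ₗ[K] L}
    (hφψ : LinearMap.IsAdjointPair B B φ ψ) :
    ∑ i, φ (e i) ⊗ₜ[K] e' i = ∑ i, e i ⊗ₜ[K] ψ (e' i) := by
  calc ∑ i, φ (e i) ⊗ₜ[K] e' i = ∑ i, ∑ k, B (e i) (ψ (e' k)) • (e k ⊗ₜ[K] e' i) := by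
        refine Finset.sum_congr rfl fun i _ => ?_
        conv_lhs => rw [← sum_apply_dual_smul_basis hdual (φ (e i))]
        simp only [sum_tmul, smul_tmul', hφψ (e i)]
    _ = ∑ k, e k ⊗ₜ[K] ψ (e' k) := by
        rw [Finset.sum_comm]
        refine Finset.sum_congr rfl fun k _ => ?_
        conv_rhs => rw [← sum_basis_apply_smul_dual hB hdual (ψ (e' k))]
        simp only [tmul_sum, tmul_smul]

end DualBasis

section Invariance

variable {K L I : Type*} [CommRing K] [LieRing L] [LieAlgebra K L] [Fintype I] [DecidableEq I]
  {B : LinearMap.BilinForm K L} {e : Module.Basis I K L} {e' : I → L}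

open TensorProduct.LieModule in
theorem lie_sum_tmul_dual_eq_zero (hB : B.Nondegenerate)
    (hBinv : ∀ x y z, B ⁅x, y⁆ z = B x ⁅y, z⁆)
    (hdual : ∀ i j, B (e i) (e' j) = if i = j then 1 else 0) (x : L) :
    ⁅x, ∑ i, e i ⊗ₜ[K] e' i⁆ = 0 := by
  have hadj : LinearMap.IsAdjointPair B B (LieAlgebra.ad K L x : L →ₗ[K] L)
      (-LieAlgebra.ad K L x : L →ₗ[K] L) := fun a b => by
    rw [LinearMap.neg_apply, LieAlgebra.ad_apply, LieAlgebra.ad_apply, ← lie_skew x a, map_neg,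
      map_neg, LinearMap.neg_apply, hBinv]
  have h := sum_apply_tmul_dual_eq_sum_tmul_apply hB hdual hadj
  simp only [LieAlgebra.ad_apply, LinearMap.neg_apply, tmul_neg, Finset.sum_neg_distrib] at h
  simp only [lie_sum, lie_tmul_right, Finset.sum_add_distrib, h, neg_add_cancel]

open TensorProduct.LieModule in
theorem lie_sum_apply_tmul_dual_eq_zero (hB : B.Nondegenerate)
    (hBinv : ∀ x y z, B ⁅x, y⁆ z = B x ⁅y, z⁆)
    (hdual : ∀ i j, B (e i) (e' j) = if i = j then 1 else 0) {x : L} {P : L →ₗ[K] L}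
    (hP : ∀ y, P ⁅x, y⁆ = ⁅x, P y⁆) :
    ⁅x, ∑ i, P (e i) ⊗ₜ[K] e' i⁆ = 0 := by
  have h := congrArg (TensorProduct.map P LinearMap.id)
    (lie_sum_tmul_dual_eq_zero hB hBinv hdual x)
  simpa [lie_sum, lie_tmul_right, hP] using h

end Invariance

section Involution

variable {K L I : Type*} [CommRing K] [LieRing L] [LieAlgebra K L] [Fintype I] [DecidableEq I]
  {B : LinearMap.BilinForm K L} {e : Module.Basis I K L} {e' : I → L} {σ : L →ₗ[K] L}

theorem lie_sum_add_tmul_dual_eq_zero (hB : B.Nondegenerate)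
    (hBinv : ∀ x y z, B ⁅x, y⁆ z = B x ⁅y, z⁆)
    (hdual : ∀ i j, B (e i) (e' j) = if i = j then 1 else 0)
    (hσlie : ∀ x y, σ ⁅x, y⁆ = ⁅σ x, σ y⁆) {x : L} (hx : σ x = x) :
    ⁅x, ∑ i, (e i + σ (e i)) ⊗ₜ[K] e' i⁆ = 0 := by
  have h := lie_sum_apply_tmul_dual_eq_zero hB hBinv hdual (x := x) (P := 1 + σ)
    fun y => by simp only [LinearMap.add_apply, Module.End.one_apply, lie_add, hσlie, hx]
  simpa only [LinearMap.add_apply, Module.End.one_apply] using h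

theorem sum_add_tmul_dual_eq_sum_tmul_add (hB : B.Nondegenerate)
    (hdual : ∀ i j, B (e i) (e' j) = if i = j then 1 else 0)
    (hσinv : ∀ x, σ (σ x) = x) (hσB : ∀ x y, B (σ x) (σ y) = B x y) :
    ∑ i, (e i + σ (e i)) ⊗ₜ[K] e' i = ∑ i, e i ⊗ₜ[K] (e' i + σ (e' i)) := by
  have hadj : LinearMap.IsAdjointPair B B ⇑(1 + σ : Module.End K L) ⇑(1 + σ : Module.End K L) :=
    fun x y => by
      have hσadj : B (σ x) y = B x (σ y) := by rw [← hσB x (σ y), hσinv]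
      simp only [LinearMap.add_apply, Module.End.one_apply, map_add, LinearMap.add_apply, hσadj]
  simpa only [LinearMap.add_apply, Module.End.one_apply] using
    sum_apply_tmul_dual_eq_sum_tmul_apply hB hdual hadj

theorem sum_add_tmul_lie_eq_zero (hB : B.Nondegenerate)
    (hBinv : ∀ x y z, B ⁅x, y⁆ z = B x ⁅y, z⁆)
    (hdual : ∀ i j, B (e i) (e' j) = if i = j then 1 else 0)
    (hσinv : ∀ x, σ (σ x) = x) (hσlie : ∀ x y, σ ⁅x, y⁆ = ⁅σ x, σ y⁆)
    (hσB : ∀ x y, B (σ x) (σ y) = B x y) :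
    ∑ j, (e j + σ (e j)) ⊗ₜ[K] ⁅e' j, ∑ i, (e i + σ (e i)) ⊗ₜ[K] e' i⁆ = 0 := by
  set r := ∑ i, (e i + σ (e i)) ⊗ₜ[K] e' i
  let D : L →ₗ[K] L ⊗[K] L :=
    (LieModule.toEnd K L (L ⊗[K] L) : L →ₗ[K] Module.End K (L ⊗[K] L)).flip r
  have h := congrArg (TensorProduct.map LinearMap.id D)
    (sum_add_tmul_dual_eq_sum_tmul_add hB hdual hσinv hσB)
  have hfix : ∀ i, σ (e' i + σ (e' i)) = e' i + σ (e' i) := fun i => by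
    rw [map_add, hσinv, add_comm]
  have hD : ∀ y, D y = ⁅y, r⁆ := fun _ => rfl
  simp only [map_sum, TensorProduct.map_tmul, LinearMap.id_apply, hD] at h
  rw [h]
  simp only [r, lie_sum_add_tmul_dual_eq_zero hB hBinv hdual hσlie (hfix _), tmul_zero,
    Finset.sum_const_zero]

end Involution

section TripleTensor

variable {K L I : Type*} [CommRing K] [LieRing L] [LieAlgebra K L] [Fintype I] {a b : I → L}

open TensorProduct.LieModule

/-- `[r₁₂, r₁₃ + r₂₃] = 0` in `L ⊗ L ⊗ L` for `r = ∑ j, a j ⊗ b j`. -/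
theorem sum_sum_lie_tmul_tmul_eq_neg (h : ∀ i, ⁅a i, ∑ j, a j ⊗ₜ[K] b j⁆ = 0) :
    ∑ j, ∑ i, ⁅a j, a i⁆ ⊗ₜ[K] (b j ⊗ₜ[K] b i)
      = -∑ j, ∑ i, a j ⊗ₜ[K] (⁅b j, a i⁆ ⊗ₜ[K] b i) := by
  have hi : ∀ i, ∑ j, (⁅a j, a i⁆ ⊗ₜ[K] (b j ⊗ₜ[K] b i) + a j ⊗ₜ[K] (⁅b j, a i⁆ ⊗ₜ[K] b i))
      = 0 := fun i => by
    have := congrArg (fun t => TensorProduct.assoc K L L L (t ⊗ₜ[K] b i)) (h i)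
    simp only [lie_sum, lie_tmul_right, sum_tmul, add_tmul, map_sum, map_add,
      TensorProduct.assoc_tmul, zero_tmul, map_zero] at this
    rw [← neg_eq_zero, ← this, ← Finset.sum_neg_distrib]
    refine Finset.sum_congr rfl fun j _ => ?_
    rw [neg_add, ← neg_tmul, ← tmul_neg, ← neg_tmul, lie_skew, lie_skew]
  simp only [eq_neg_iff_add_eq_zero, ← Finset.sum_add_distrib]
  rw [Finset.sum_comm]
  exact Finset.sum_eq_zero fun i _ => hi i

/-- `[r₁₂ + r₁₃, r₂₃] = 0` in `L ⊗ L ⊗ L` for `r = ∑ j, a j ⊗ b j`. -/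
theorem sum_sum_tmul_tmul_lie_eq_neg (h : ∑ j, a j ⊗ₜ[K] ⁅b j, ∑ i, a i ⊗ₜ[K] b i⁆ = 0) :
    ∑ j, ∑ i, a j ⊗ₜ[K] (a i ⊗ₜ[K] ⁅b j, b i⁆)
      = -∑ j, ∑ i, a j ⊗ₜ[K] (⁅b j, a i⁆ ⊗ₜ[K] b i) := by
  rw [eq_neg_iff_add_eq_zero, ← h, ← Finset.sum_add_distrib]
  refine Finset.sum_congr rfl fun j _ => ?_
  simp only [lie_sum, lie_tmul_right, tmul_sum, tmul_add, Finset.sum_add_distrib, add_comm]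

end TripleTensor

-- The commutator bracket of a ring is not a global `LieRing` instance; it is installed locally.
theorem Ring.lie_sum_sum {A ι κ : Type*} [Ring A] (s : Finset ι) (t : Finset κ) (x : ι → A)
    (y : κ → A) : ⁅∑ j ∈ s, x j, ∑ i ∈ t, y i⁆ = ∑ j ∈ s, ∑ i ∈ t, ⁅x j, y i⁆ :=
  letI := LieRing.ofAssociativeRing (A := A)
  sum_lie_sum s t x y

theorem Ring.smul_lie_smul {R A : Type*} [CommMonoid R] [Ring A] [SMul R A]
    [IsScalarTower R A A] [IsScalarTower R R A] [SMulCommClass R A A] (r s : R) (x y : A) :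
    ⁅r • x, s • y⁆ = (r * s) • ⁅x, y⁆ := by
  rw [Ring.lie_def, Ring.lie_def, smul_mul_smul_comm, smul_mul_smul_comm, mul_comm s,
    ← smul_one_mul (r * s) (x * y - y * x), mul_sub, smul_one_mul, smul_one_mul]

section Envelope

variable {K L I : Type*} [Field K] [LieRing L] [LieAlgebra K L] [Fintype I]

def ιTensor3 (K L : Type*) [Field K] [LieRing L] [LieAlgebra K L] :
    L ⊗[K] (L ⊗[K] L) →ₗ[K] UniversalEnvelopingAlgebra K L ⊗[K]
      (UniversalEnvelopingAlgebra K L ⊗[K] UniversalEnvelopingAlgebra K L) :=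
  letI := LieRing.ofAssociativeRing (A := UniversalEnvelopingAlgebra K L)
  let ι := (UniversalEnvelopingAlgebra.ι K : L →ₗ⁅K⁆ UniversalEnvelopingAlgebra K L).toLinearMap
  TensorProduct.map ι (TensorProduct.map ι ι)

@[simp]
theorem ιTensor3_tmul (x y z : L) :
    ιTensor3 K L (x ⊗ₜ[K] (y ⊗ₜ[K] z)) = UniversalEnvelopingAlgebra.ι K x ⊗ₜ[K]
      (UniversalEnvelopingAlgebra.ι K y ⊗ₜ[K] UniversalEnvelopingAlgebra.ι K z) :=
  rfl

theorem tensor12_add (u u' v : I → L) :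
    tensor12 K u v + tensor12 K u' v = tensor12 K (fun i => u i + u' i) v := by
  simp only [tensor12, ← Finset.sum_add_distrib, map_add, add_tmul]

theorem tensor13_add (u u' v : I → L) :
    tensor13 K u v + tensor13 K u' v = tensor13 K (fun i => u i + u' i) v := by
  simp only [tensor13, ← Finset.sum_add_distrib, map_add, add_tmul]

theorem tensor23_add (u u' v : I → L) :
    tensor23 K u v + tensor23 K u' v = tensor23 K (fun i => u i + u' i) v := by
  simp only [tensor23, ← Finset.sum_add_distrib, map_add, add_tmul, tmul_add]

theorem lie_tensor12_tensor13 (u v x y : I → L) :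
    ⁅tensor12 K u v, tensor13 K x y⁆
      = ιTensor3 K L (∑ j, ∑ i, ⁅u j, x i⁆ ⊗ₜ[K] (v j ⊗ₜ[K] y i)) := by
  simp only [tensor12, tensor13, Ring.lie_sum_sum, map_sum]
  refine Finset.sum_congr rfl fun j _ => Finset.sum_congr rfl fun i _ => ?_
  simp [Ring.lie_def, sub_tmul]

theorem lie_tensor12_tensor23 (u v x y : I → L) :
    ⁅tensor12 K u v, tensor23 K x y⁆
      = ιTensor3 K L (∑ j, ∑ i, u j ⊗ₜ[K] (⁅v j, x i⁆ ⊗ₜ[K] y i)) := by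
  simp only [tensor12, tensor23, Ring.lie_sum_sum, map_sum]
  refine Finset.sum_congr rfl fun j _ => Finset.sum_congr rfl fun i _ => ?_
  simp [Ring.lie_def, sub_tmul, tmul_sub]

theorem lie_tensor13_tensor23 (u v x y : I → L) :
    ⁅tensor13 K u v, tensor23 K x y⁆
      = ιTensor3 K L (∑ j, ∑ i, u j ⊗ₜ[K] (x i ⊗ₜ[K] ⁅v j, y i⁆)) := by
  simp only [tensor13, tensor23, Ring.lie_sum_sum, map_sum]
  refine Finset.sum_congr rfl fun j _ => Finset.sum_congr rfl fun i _ => ?_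
  simp [Ring.lie_def, tmul_sub]

variable {a b : I → L}

theorem lie_tensor12_tensor23_eq_neg (h : ∀ i, ⁅a i, ∑ j, a j ⊗ₜ[K] b j⁆ = 0) :
    ⁅tensor12 K a b, tensor23 K a b⁆ = -⁅tensor12 K a b, tensor13 K a b⁆ := by
  rw [lie_tensor12_tensor23, lie_tensor12_tensor13, sum_sum_lie_tmul_tmul_eq_neg h, map_neg,
    neg_neg]

theorem lie_tensor13_tensor23_eq_neg (h : ∑ j, a j ⊗ₜ[K] ⁅b j, ∑ i, a i ⊗ₜ[K] b i⁆ = 0) :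
    ⁅tensor13 K a b, tensor23 K a b⁆ = -⁅tensor12 K a b, tensor23 K a b⁆ := by
  rw [lie_tensor13_tensor23, lie_tensor12_tensor23, sum_sum_tmul_tmul_lie_eq_neg h, map_neg]

end Envelope

theorem cybe_solution_ii_general
    {K L I : Type*} [Field K] [LieRing L] [LieAlgebra K L]
    [Fintype I] [DecidableEq I]
    (B : LinearMap.BilinForm K L)
    (hBinv : ∀ x y z, B ⁅x, y⁆ z = B x ⁅y, z⁆)
    (hBnd : B.Nondegenerate)
    (e : Module.Basis I K L) (e' : I → L)
    (hdual : ∀ i j, B (e i) (e' j) = if i = j then 1 else 0)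
    (σ : L →ₗ[K] L)
    (hσinv : ∀ x, σ (σ x) = x)
    (hσlie : ∀ x y, σ ⁅x, y⁆ = ⁅σ x, σ y⁆)
    (hσB : ∀ x y, B (σ x) (σ y) = B x y)
    (f g : K → K) (l1 l2 l3 : K)
    (h12 : f l1 ≠ f l2) (h13 : f l1 ≠ f l3) (h23 : f l2 ≠ f l3) :
    ⁅(g l2 / (f l1 - f l2)) • (tensor12 K (⇑e) e' + tensor12 K (fun i => σ (e i)) e'),
      (g l3 / (f l1 - f l3)) • (tensor13 K (⇑e) e' + tensor13 K (fun i => σ (e i)) e')⁆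
    + ⁅(g l2 / (f l1 - f l2)) • (tensor12 K (⇑e) e' + tensor12 K (fun i => σ (e i)) e'),
        (g l3 / (f l2 - f l3)) • (tensor23 K (⇑e) e' + tensor23 K (fun i => σ (e i)) e')⁆
    - ⁅(g l3 / (f l1 - f l3)) • (tensor13 K (⇑e) e' + tensor13 K (fun i => σ (e i)) e'),
        (g l2 / (f l3 - f l2)) • (tensor23 K (⇑e) e' + tensor23 K (fun i => σ (e i)) e')⁆
    = 0 := by
  have hfix : ∀ i, σ (e i + σ (e i)) = e i + σ (e i) := fun i => by rw [map_add, hσinv, add_comm]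
  have h1223 := lie_tensor12_tensor23_eq_neg (K := K)
    fun i => lie_sum_add_tmul_dual_eq_zero hBnd hBinv hdual hσlie (hfix i)
  have h1323 := lie_tensor13_tensor23_eq_neg
    (sum_add_tmul_lie_eq_zero hBnd hBinv hdual hσinv hσlie hσB)
  have hscalar : g l2 / (f l1 - f l2) * (g l3 / (f l1 - f l3))
      - g l2 / (f l1 - f l2) * (g l3 / (f l2 - f l3))
      - g l3 / (f l1 - f l3) * (g l2 / (f l3 - f l2)) = 0 := by
    field_simp [sub_ne_zero.mpr h12, sub_ne_zero.mpr h13, sub_ne_zero.mpr h23,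
      sub_ne_zero.mpr h23.symm]
    ring
  rw [tensor12_add, tensor13_add, tensor23_add]
  rw [Ring.smul_lie_smul, Ring.smul_lie_smul, Ring.smul_lie_smul, h1323, h1223, neg_neg]
  linear_combination (norm := module) hscalar • ⁅tensor12 K (fun i => e i + σ (e i)) e',
    tensor13 K (fun i => e i + σ (e i)) e'⁆

/-- Solution (ii) of the classification:
`t_{kl} = (g(λ_l)/(f(λ_k) − f(λ_l)))·(C_{kl} + σ̂_{kl})` satisfies the classical
Yang–Baxter equation `YB(t)₁₂₃ = 0`. -/
theorem cybe_solution_ii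
    {K L I : Type*} [Field K] [CharZero K] [LieRing L] [LieAlgebra K L]
    [Module.Finite K L] [Fintype I] [DecidableEq I]
    (B : LinearMap.BilinForm K L)
    (hBsymm : ∀ x y, B x y = B y x)
    (hBinv : ∀ x y z, B ⁅x, y⁆ z = B x ⁅y, z⁆)
    (hBnd : B.Nondegenerate)
    (e : Module.Basis I K L) (e' : I → L)
    (hdual : ∀ i j, B (e i) (e' j) = if i = j then 1 else 0)
    (σ : L →ₗ[K] L)
    (hσinv : ∀ x, σ (σ x) = x)
    (hσlie : ∀ x y, σ ⁅x, y⁆ = ⁅σ x, σ y⁆)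
    (hσB : ∀ x y, B (σ x) (σ y) = B x y)
    (f g : K → K) (l1 l2 l3 : K)
    (h12 : f l1 ≠ f l2) (h13 : f l1 ≠ f l3) (h23 : f l2 ≠ f l3) :
    ⁅(g l2 / (f l1 - f l2)) • (tensor12 K (⇑e) e' + tensor12 K (fun i => σ (e i)) e'),
      (g l3 / (f l1 - f l3)) • (tensor13 K (⇑e) e' + tensor13 K (fun i => σ (e i)) e')⁆
    + ⁅(g l2 / (f l1 - f l2)) • (tensor12 K (⇑e) e' + tensor12 K (fun i => σ (e i)) e'),
        (g l3 / (f l2 - f l3)) • (tensor23 K (⇑e) e' + tensor23 K (fun i => σ (e i)) e')⁆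
    - ⁅(g l3 / (f l1 - f l3)) • (tensor13 K (⇑e) e' + tensor13 K (fun i => σ (e i)) e'),
        (g l2 / (f l3 - f l2)) • (tensor23 K (⇑e) e' + tensor23 K (fun i => σ (e i)) e')⁆
    = 0 :=
  cybe_solution_ii_general B hBinv hBnd e e' hdual σ hσinv hσlie hσB f g l1 l2 l3 h12 h13 h23
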